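/- arXiv:1611.01936 — 2 statements merged into one kernel-verified Lean document; each statement's English description precedes it below -/
import Mathlib

section
/- Let G be a bipartite graph with adjacency matrix A, and for a fixed nonnegative integer k and real α define the continuity matrix C(α) = B - Diag(B) where B = A + αA² + ⋯ + α^k A^{k+1} and Diag(B) is the diagonal matrix of diagonal entries of B. Then λ is an eigenvalue of C(α₀) with multiplicity m if and only if -λ is an eigenvalue of C(-α₀) with multiplicity m. In other words, the spectrum of C(-α₀) equals the negation of the spectrum of C(α₀). -/
open Matrix Finset

/-- Continuity matrix `C(α)` of a matrix `A`: `B - Diag(B)` with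
`B = Σ_{i=0}^{k} α^i A^{i+1}`. -/
noncomputable def contMatrix {n : Type*} [Fintype n] [DecidableEq n]
    (A : Matrix n n ℝ) (α : ℝ) (k : ℕ) : Matrix n n ℝ :=
  (∑ i ∈ Finset.range (k + 1), α ^ i • A ^ (i + 1)) -
    Matrix.diagonal (fun j => (∑ i ∈ Finset.range (k + 1), α ^ i • A ^ (i + 1)) j j)

open Polynomial in
lemma charpoly_conj_invol {n : Type*} [Fintype n] [DecidableEq n] {R : Type*} [CommRing R]
    (S A : Matrix n n R) (hS : S * S = 1) :
    (S * A * S).charpoly = A.charpoly := by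
  have hSC : S.map (C : R →+* R[X]) * S.map C = 1 := by
    rw [← Matrix.map_mul, hS, Matrix.map_one _ (map_zero _) (map_one _)]
  have key : charmatrix (S * A * S) = S.map C * charmatrix A * S.map C := by
    unfold charmatrix
    rw [Matrix.mul_sub, Matrix.sub_mul]
    congr 1
    · rw [← (Matrix.scalar_commute (X : R[X]) (fun r => mul_comm _ _) (S.map C)).eq, mul_assoc,
        hSC, mul_one]
    · rw [RingHom.mapMatrix_apply, RingHom.mapMatrix_apply, ← Matrix.map_mul, ← Matrix.map_mul]
  rw [Matrix.charpoly, key, det_mul, det_mul, mul_comm, ← mul_assoc, ← det_mul, hSC, det_one,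
    one_mul, Matrix.charpoly]

/-- For a bipartite graph (adjacency matrix in block form `[[0, M],[Mᵀ, 0]]` with
0-1 entries), the spectrum of `C(-α₀)` is the negation of the spectrum of `C(α₀)`:
the characteristic polynomials of `C(-α₀)` and `-C(α₀)` coincide. -/
theorem continuity_spectrum_bipartite_symmetric
    (p q : ℕ) (M : Matrix (Fin p) (Fin q) ℝ)
    (h01 : ∀ i j, M i j = 0 ∨ M i j = 1)
    (A : Matrix (Fin p ⊕ Fin q) (Fin p ⊕ Fin q) ℝ)
    (hA : A = Matrix.fromBlocks 0 M Mᵀ 0)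
    (k : ℕ) (α₀ : ℝ) (hα : |α₀| < 1) :
    (contMatrix A (-α₀) k).charpoly = (-(contMatrix A α₀ k)).charpoly := by
  set s : Fin p ⊕ Fin q → ℝ := Sum.elim (fun _ => 1) (fun _ => -1) with hs
  have hs2 : ∀ j, s j * s j = 1 := by rintro (j | j) <;> simp [hs]
  set S : Matrix (Fin p ⊕ Fin q) (Fin p ⊕ Fin q) ℝ := Matrix.diagonal s with hSdef
  have hSS : S * S = 1 := by
    rw [hSdef, diagonal_mul_diagonal]
    have : (fun i => s i * s i) = fun _ => (1 : ℝ) := funext hs2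
    rw [this, diagonal_one]
  have hSA : S * A * S = -A := by
    rw [hA, hSdef]
    ext i j
    simp only [Matrix.mul_diagonal, Matrix.diagonal_mul, Matrix.neg_apply]
    rcases i with i | i <;> rcases j with j | j <;> simp [hs, Matrix.fromBlocks]
  have hpow : ∀ m : ℕ, S * A ^ m * S = ((-1 : ℝ)) ^ m • A ^ m := by
    intro m
    induction m with
    | zero => simp [hSS]
    | succ m ih =>
      have h1 : S * A ^ (m + 1) * S = (S * A ^ m * S) * (S * A * S) := by
        rw [pow_succ]
        simp only [mul_assoc]
        rw [← mul_assoc S S (A * S), hSS, one_mul]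
      rw [h1, ih, hSA, pow_succ, pow_succ, smul_mul_assoc, mul_neg, mul_neg_one, neg_smul,
        smul_neg]
  have hB : ∀ α : ℝ, S * (∑ i ∈ Finset.range (k + 1), α ^ i • A ^ (i + 1)) * S =
      -(∑ i ∈ Finset.range (k + 1), (-α) ^ i • A ^ (i + 1)) := by
    intro α
    rw [Finset.mul_sum, Finset.sum_mul, ← Finset.sum_neg_distrib]
    refine Finset.sum_congr rfl fun i _ => ?_
    rw [mul_smul_comm, smul_mul_assoc, hpow, smul_smul, ← neg_smul]
    congr 1
    rw [pow_succ, neg_pow]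
    ring
  have hdiagB : ∀ (α : ℝ) (j : Fin p ⊕ Fin q), (∑ i ∈ Finset.range (k + 1), α ^ i • A ^ (i + 1)) j j =
      -((∑ i ∈ Finset.range (k + 1), (-α) ^ i • A ^ (i + 1)) j j) := by
    intro α j
    have h1 := congrFun (congrFun (hB α) j) j
    have h2 : (S * (∑ i ∈ Finset.range (k + 1), α ^ i • A ^ (i + 1)) * S) j j =
        (∑ i ∈ Finset.range (k + 1), α ^ i • A ^ (i + 1)) j j := by
      rw [hSdef, Matrix.mul_diagonal, Matrix.diagonal_mul]
      rw [mul_comm (s j), mul_assoc, hs2 j, mul_one]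
    rw [h2] at h1
    simpa using h1
  have hkey : S * (contMatrix A α₀ k) * S = -(contMatrix A (-α₀) k) := by
    unfold contMatrix
    have hSdg : ∀ d : (Fin p ⊕ Fin q) → ℝ, S * Matrix.diagonal d * S = Matrix.diagonal d := by
      intro d
      rw [hSdef, diagonal_mul_diagonal, diagonal_mul_diagonal]
      have h3 : (fun i => s i * d i * s i) = d :=
        funext fun j => by rw [mul_comm (s j), mul_assoc, hs2 j, mul_one]
      rw [h3]
    rw [Matrix.mul_sub, Matrix.sub_mul, hB α₀, hSdg]
    have hd : (fun j => (∑ i ∈ Finset.range (k + 1), α₀ ^ i • A ^ (i + 1)) j j) =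
        -(fun j => (∑ i ∈ Finset.range (k + 1), (-α₀) ^ i • A ^ (i + 1)) j j) :=
      funext (hdiagB α₀)
    rw [hd]
    ext i j
    by_cases h : i = j
    · subst h; simp
    · simp [Matrix.diagonal_apply_ne _ h]
  have : contMatrix A (-α₀) k = S * (-(contMatrix A α₀ k)) * S := by
    rw [Matrix.mul_neg, Matrix.neg_mul, hkey, neg_neg]
  rw [this]
  exact charpoly_conj_invol _ _ hSS
end

section
/- If there exists α such that all eigenvalues of the continuity matrix C(α) of a graph G are simple (the real symmetric matrix C(α) has n distinct eigenvalues), then every automorphism of G other than the identity has order 2, i.e., π∘π = identity for every automorphism π of G. -/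
open Matrix SimpleGraph Finset

open Polynomial in
lemma charpoly_conj_aux {m : Type*} [Fintype m] [DecidableEq m] {R : Type*} [CommRing R]
    (U V D : Matrix m m R) (h1 : U * V = 1) :
    (U * D * V).charpoly = D.charpoly := by
  have hscalar : U.map Polynomial.C * Matrix.scalar m (Polynomial.X (R := R)) * V.map Polynomial.C
      = Matrix.scalar m (Polynomial.X (R := R)) := by
    rw [scalar_apply, ← smul_one_eq_diagonal, mul_smul_comm, mul_one, smul_mul_assoc,
      ← Matrix.map_mul, h1]
    simp [smul_one_eq_diagonal]
  have key : charmatrix (U * D * V) =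
      U.map Polynomial.C * charmatrix D * V.map Polynomial.C := by
    unfold charmatrix
    rw [mul_sub, sub_mul, hscalar]
    congr 1
    rw [RingHom.mapMatrix_apply, RingHom.mapMatrix_apply]
    show (U * D * V).map Polynomial.C = _
    rw [Matrix.map_mul, Matrix.map_mul]
  have hdet1 : (U.map (Polynomial.C (R := R))).det * (V.map Polynomial.C).det = 1 := by
    rw [← det_mul, ← Matrix.map_mul, h1]
    simp
  rw [Matrix.charpoly, Matrix.charpoly, key, det_mul, det_mul]
  calc (U.map (Polynomial.C (R := R))).det * (charmatrix D).det * (V.map Polynomial.C).det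
      = (charmatrix D).det * ((U.map Polynomial.C).det * (V.map Polynomial.C).det) := by ring
    _ = (charmatrix D).det := by rw [hdet1, mul_one]

open Polynomial in
lemma charpoly_diag_aux {m : Type*} [Fintype m] [DecidableEq m] {R : Type*} [CommRing R]
    (d : m → R) : (Matrix.diagonal d).charpoly = ∏ i, (X - Polynomial.C (d i)) := by
  have : charmatrix (Matrix.diagonal d) = Matrix.diagonal (fun i => X - Polynomial.C (d i)) := by
    ext i j
    by_cases h : i = j
    · subst h; simp [charmatrix_apply_eq]
    · simp [charmatrix_apply_ne _ _ _ h, Matrix.diagonal_apply_ne _ h]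
  rw [Matrix.charpoly, this, det_diagonal]

open Polynomial in
lemma inj_of_squarefree_aux {m : Type*} [Fintype m] [DecidableEq m] {F : Type*} [Field F]
    (d : m → F) (h : Squarefree (∏ i, (X - Polynomial.C (d i)))) :
    Function.Injective d := by
  intro i j hij
  by_contra hne
  have hj : j ∈ (Finset.univ.erase i) :=
    Finset.mem_erase.2 ⟨fun hh => hne hh.symm, Finset.mem_univ j⟩
  have h1 : ∏ x, (X - Polynomial.C (d x)) =
      (X - Polynomial.C (d i)) * ((X - Polynomial.C (d j)) *
        ∏ x ∈ (Finset.univ.erase i).erase j, (X - Polynomial.C (d x))) := by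
    rw [← Finset.mul_prod_erase Finset.univ _ (Finset.mem_univ i),
      ← Finset.mul_prod_erase _ _ hj]
  have hdvd : (X - Polynomial.C (d i)) * (X - Polynomial.C (d i)) ∣
      ∏ x, (X - Polynomial.C (d x)) := by
    rw [h1, hij]
    exact mul_dvd_mul_left _ (dvd_mul_right _ _)
  exact Polynomial.not_isUnit_X_sub_C (d i) (h _ hdvd)

/-- If for some `α` all eigenvalues of the continuity matrix `C(α)` are simple
(its characteristic polynomial is squarefree), then every automorphism of `G`
has order dividing 2: `π ∘ π = id`. -/
theorem simple_spectrum_automorphism_order_two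
    (n : ℕ) (k : ℕ) (G : SimpleGraph (Fin n)) [DecidableRel G.Adj]
    (hsimple : ∃ α : ℝ, Squarefree (contMatrix (G.adjMatrix ℝ) α k).charpoly) :
    ∀ π : G ≃g G, ∀ v : Fin n, π (π v) = v := by
  obtain ⟨α, hsq⟩ := hsimple
  set A : Matrix (Fin n) (Fin n) ℝ := G.adjMatrix ℝ with hAdef
  set B : Matrix (Fin n) (Fin n) ℝ := ∑ i ∈ Finset.range (k + 1), α ^ i • A ^ (i + 1) with hBdef
  set M : Matrix (Fin n) (Fin n) ℝ := contMatrix A α k with hMdef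
  have hMB : M = B - Matrix.diagonal (fun j => B j j) := rfl
  intro π v
  set σ : Equiv.Perm (Fin n) := π.toEquiv with hσ
  set P : Matrix (Fin n) (Fin n) ℝ := σ.toPEquiv.toMatrix with hPdef
  have hσapp : ∀ w, π w = σ w := fun w => rfl
  -- P commutes with A
  have hPA : P * A = A * P := by
    rw [hPdef, PEquiv.toMatrix_toPEquiv_mul, PEquiv.mul_toMatrix_toPEquiv]
    ext i j
    simp only [Matrix.submatrix_apply, id_eq, hAdef, SimpleGraph.adjMatrix_apply]
    have : G.Adj (σ i) j ↔ G.Adj i (σ.symm j) := by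
      conv_lhs => rw [← Equiv.apply_symm_apply σ j]
      exact π.map_adj_iff
    simp [this]
  have hPB : Commute P B := by
    refine Commute.sum_right _ _ _ (fun i _ => ?_)
    have hCA : Commute P A := hPA
    exact (hCA.pow_right (i + 1)).smul_right _
  have hBconj : ∀ i j, B (σ i) j = B i (σ.symm j) := by
    intro i j
    have h := hPB.eq
    rw [hPdef, PEquiv.toMatrix_toPEquiv_mul, PEquiv.mul_toMatrix_toPEquiv] at h
    have := congrFun (congrFun h i) j
    simpa using this
  have hBdiag : ∀ i, B (σ i) (σ i) = B i i := by
    intro i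
    have := hBconj i (σ i)
    simpa using this
  have hPD : Commute P (Matrix.diagonal (fun j => B j j)) := by
    show P * _ = _ * P
    rw [hPdef, PEquiv.toMatrix_toPEquiv_mul, PEquiv.mul_toMatrix_toPEquiv]
    ext i j
    simp only [Matrix.submatrix_apply, id_eq]
    by_cases h : σ i = j
    · subst h
      simp [Matrix.diagonal_apply_eq, hBdiag]
    · rw [Matrix.diagonal_apply_ne _ h, Matrix.diagonal_apply_ne]
      intro hc
      exact h (by rw [hc]; simp)
  have hPM : Commute P M := by
    rw [hMB]
    exact hPB.sub_right hPD
  -- Hermitian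
  have hH : M.IsHermitian := by
    rw [Matrix.IsHermitian, Matrix.conjTranspose_eq_transpose_of_trivial]
    rw [hMB]
    rw [Matrix.transpose_sub, Matrix.diagonal_transpose]
    congr 1
    rw [hBdef, Matrix.transpose_sum]
    refine Finset.sum_congr rfl (fun i _ => ?_)
    rw [Matrix.transpose_smul, Matrix.transpose_pow, (G.isSymm_adjMatrix).eq]
  set U : Matrix (Fin n) (Fin n) ℝ := (hH.eigenvectorUnitary : Matrix (Fin n) (Fin n) ℝ) with hUdef
  set d : Fin n → ℝ := RCLike.ofReal ∘ hH.eigenvalues with hddef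
  have hspec : M = U * Matrix.diagonal d * star U := hH.spectral_theorem
  have hU1 : U * star U = 1 := Matrix.mem_unitaryGroup_iff.mp hH.eigenvectorUnitary.2
  have hU2 : star U * U = 1 := Matrix.mem_unitaryGroup_iff'.mp hH.eigenvectorUnitary.2
  have hinj : Function.Injective d := by
    apply inj_of_squarefree_aux
    rw [← charpoly_diag_aux, ← charpoly_conj_aux U (star U) _ hU1, ← hspec]
    exact hsq
  set Q : Matrix (Fin n) (Fin n) ℝ := star U * P * U with hQdef
  have hQD : Q * Matrix.diagonal d = Matrix.diagonal d * Q := by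
    calc Q * Matrix.diagonal d = star U * (P * M) * U := by
          rw [hspec, hQdef]
          have : star U * (P * (U * Matrix.diagonal d * star U)) * U =
              (star U * P * U) * Matrix.diagonal d * (star U * U) := by noncomm_ring
          rw [this, hU2, Matrix.mul_one]
      _ = star U * (M * P) * U := by rw [hPM.eq]
      _ = Matrix.diagonal d * Q := by
          rw [hspec, hQdef]
          have : star U * ((U * Matrix.diagonal d * star U) * P) * U =
              (star U * U) * Matrix.diagonal d * (star U * P * U) := by noncomm_ring
          rw [this, hU2, Matrix.one_mul]
  have hQoff : ∀ i j, i ≠ j → Q i j = 0 := by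
    intro i j hij
    have h := congrFun (congrFun hQD i) j
    rw [Matrix.mul_diagonal, Matrix.diagonal_mul] at h
    have hd : d j ≠ d i := fun hc => hij (hinj hc).symm
    have : Q i j * (d j - d i) = 0 := by ring_nf; linarith [h]
    rcases mul_eq_zero.mp this with h' | h'
    · exact h'
    · exact absurd (sub_eq_zero.mp h') hd
  have hQsymm : Qᵀ = Q := by
    ext i j
    by_cases h : i = j
    · subst h; rfl
    · rw [Matrix.transpose_apply, hQoff i j h, hQoff j i (Ne.symm h)]
  have hPQ : P = U * Q * star U := by
    rw [hQdef]
    have : U * (star U * P * U) * star U = (U * star U) * P * (U * star U) := by noncomm_ring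
    rw [this, hU1, Matrix.one_mul, Matrix.mul_one]
  have hstarU : star U = Uᵀ := by
    rw [Matrix.star_eq_conjTranspose, Matrix.conjTranspose_eq_transpose_of_trivial]
  have hPsymm : Pᵀ = P := by
    conv_lhs => rw [hPQ]
    rw [Matrix.transpose_mul, Matrix.transpose_mul, hstarU, Matrix.transpose_transpose,
      hQsymm, ← hstarU, ← Matrix.mul_assoc]
    exact hPQ.symm
  -- conclude
  have hPvw : P v (σ v) = 1 := by
    rw [hPdef, PEquiv.toMatrix_apply, Equiv.toPEquiv_apply]
    simp
  have h2 : P (σ v) v = 1 := by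
    have := congrFun (congrFun hPsymm (σ v)) v
    rw [Matrix.transpose_apply] at this
    rw [← this, hPvw]
  rw [hPdef, PEquiv.toMatrix_apply, Equiv.toPEquiv_apply] at h2
  by_cases h : v = σ (σ v)
  · rw [hσapp, hσapp, ← h]
  · exfalso
    rw [if_neg (by simpa using fun hh => h hh.symm)] at h2
    exact zero_ne_one h2
end
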